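/- If ⊢ e : t is derivable in λ•→ with empty typing context (e closed) and e is normalizing (e reduces in zero or more steps to a normal form), then t ≠ •^∞. -/

import Mathlib

/-!
Subject reduction carries `⊢ e : •^∞` to the normal form of `e`. A closed weak head normal form
is a value: an abstraction, a constant, `pair a`, `⟨a, b⟩` or `succ a`; a projection applied to a
normal argument is never stuck, because a closed normal form of product type is a pair. The types
of a value are `•ⁿ x` with `x` an arrow, a product or `Nat`, and peeling bullets off `•^∞` never
reaches such a tree.
-/

namespace LambdaBullet

/-- Head constructors for pseudo-types. -/
inductive TyHead : Type
  | var (n : ℕ)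
  | nat
  | prod
  | arrow
  | bullet

/-- Arity of each pseudo-type constructor. -/
def tyArity : TyHead → Type
  | .var _ => Empty
  | .nat => Empty
  | .prod => Bool
  | .arrow => Bool
  | .bullet => Unit

/-- The polynomial functor whose M-type is the type of pseudo-types. -/
def TyP : PFunctor := ⟨TyHead, tyArity⟩

/-- Pseudo-types: possibly infinite coinductively generated trees. -/
abbrev PseudoType := TyP.M

/-- Type variable. -/
def tvar (n : ℕ) : PseudoType := PFunctor.M.mk ⟨TyHead.var n, Empty.elim⟩
/-- The type `Nat`. -/
def tnat : PseudoType := PFunctor.M.mk ⟨TyHead.nat, Empty.elim⟩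
/-- Product type. -/
def tprod (t s : PseudoType) : PseudoType :=
  PFunctor.M.mk ⟨TyHead.prod, fun b => bif b then s else t⟩
/-- Arrow type. -/
def tarrow (t s : PseudoType) : PseudoType :=
  PFunctor.M.mk ⟨TyHead.arrow, fun b => bif b then s else t⟩
/-- Delay type `•t`. -/
def tbullet (t : PseudoType) : PseudoType :=
  PFunctor.M.mk ⟨TyHead.bullet, fun _ => t⟩
/-- Iterated delay `•ⁿ t`. -/
def tbulletN (n : ℕ) (t : PseudoType) : PseudoType := tbullet^[n] t

/-- `Child t s` holds iff `s` is an immediate subtree of `t`. -/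
def Child (t s : PseudoType) : Prop := ∃ b : TyP.B t.dest.1, t.dest.2 b = s

/-- `Subtree t s` holds iff `s` is a subtree of `t`. -/
def Subtree (t s : PseudoType) : Prop := Relation.ReflTransGen Child t s

/-- A pseudo-type is regular if it has finitely many distinct subtrees. -/
def Regular (t : PseudoType) : Prop := {s | Subtree t s}.Finite

/-- The root of the tree is a `•`. -/
def headIsBullet (t : PseudoType) : Prop := t.dest.1 = TyHead.bullet

/-- A pseudo-type is guarded if every infinite path in its tree has
infinitely many `•`'s. -/
def Guarded (t : PseudoType) : Prop :=
  ∀ f : ℕ → PseudoType, f 0 = t → (∀ n, Child (f n) (f (n + 1))) →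
    ∀ N, ∃ n, N ≤ n ∧ headIsBullet (f n)

/-- A type is a regular and guarded pseudo-type. -/
def IsType (t : PseudoType) : Prop := Regular t ∧ Guarded t

/-- `•^∞`: the unique pseudo-type satisfying `•^∞ = • •^∞`. -/
def binf : PseudoType := PFunctor.M.corec (fun _ : Unit => ⟨TyHead.bullet, fun _ => ()⟩) ()

/-- Constants. -/
inductive Const : Type
  | pair
  | cfst
  | csnd
  | zero
  | succ

/-- Expressions (with de Bruijn indices for variables). -/
inductive Expr : Type
  | var (x : ℕ)
  | const (k : Const)
  | lam (e : Expr)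
  | app (e₁ e₂ : Expr)

def liftRen (f : ℕ → ℕ) : ℕ → ℕ
  | 0 => 0
  | n + 1 => f n + 1

def rename (f : ℕ → ℕ) : Expr → Expr
  | .var n => .var (f n)
  | .const k => .const k
  | .lam e => .lam (rename (liftRen f) e)
  | .app a b => .app (rename f a) (rename f b)

def liftSub (ρ : ℕ → Expr) : ℕ → Expr
  | 0 => .var 0
  | n + 1 => rename Nat.succ (ρ n)

/-- Simultaneous (capture-avoiding) substitution. -/
def substE (ρ : ℕ → Expr) : Expr → Expr
  | .var n => ρ n
  | .const k => .const k
  | .lam e => .lam (substE (liftSub ρ) e)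
  | .app a b => .app (substE ρ a) (substE ρ b)

/-- `subst0 e f` is `e[f/x]` for the topmost variable `x`. -/
def subst0 (e f : Expr) : Expr :=
  substE (fun n => match n with | 0 => f | n + 1 => .var n) e

/-- The pair `⟨e₁, e₂⟩`. -/
def mkPair (e₁ e₂ : Expr) : Expr := .app (.app (.const .pair) e₁) e₂

/-- Evaluation contexts E ::= [] | E e | fst E | snd E | succ E. -/
inductive ECtx : Type
  | hole
  | app (E : ECtx) (e : Expr)
  | fst (E : ECtx)
  | snd (E : ECtx)
  | succ (E : ECtx)

/-- Plugging an expression into an evaluation context. -/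
def ECtx.plug : ECtx → Expr → Expr
  | .hole, e => e
  | .app E f, e => .app (E.plug e) f
  | .fst E, e => .app (.const .cfst) (E.plug e)
  | .snd E, e => .app (.const .csnd) (E.plug e)
  | .succ E, e => .app (.const .succ) (E.plug e)

/-- Head reduction rules. -/
inductive HeadRed : Expr → Expr → Prop
  | beta (e f) : HeadRed (.app (.lam e) f) (subst0 e f)
  | fst (e₁ e₂) : HeadRed (.app (.const .cfst) (mkPair e₁ e₂)) e₁
  | snd (e₁ e₂) : HeadRed (.app (.const .csnd) (mkPair e₁ e₂)) e₂

/-- Weak head (call-by-name) reduction: head rules closed under evaluation contexts. -/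
def Red (a b : Expr) : Prop :=
  ∃ (E : ECtx) (e f : Expr), HeadRed e f ∧ a = E.plug e ∧ b = E.plug f

/-- Many-step reduction. -/
def RedStar : Expr → Expr → Prop := Relation.ReflTransGen Red

/-- (Weak head) normal forms. -/
def NormalForm (e : Expr) : Prop := ∀ f, ¬ Red e f

/-- Typing contexts: finite maps from (de Bruijn) variables to types. -/
def Ctx : Type := ℕ → Option PseudoType

/-- Extending a typing context with a type for the topmost variable. -/
def Ctx.cons (t : PseudoType) (Γ : Ctx) : Ctx :=
  fun n => match n with | 0 => some t | n + 1 => Γ n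

/-- The type assignment κ for constants. -/
inductive KappaTy : Const → PseudoType → Prop
  | pair {t s} : IsType t → IsType s →
      KappaTy .pair (tarrow t (tarrow s (tprod t s)))
  | fst {t s} : IsType t → IsType s →
      KappaTy .cfst (tarrow (tprod t s) t)
  | snd {t s} : IsType t → IsType s →
      KappaTy .csnd (tarrow (tprod t s) s)
  | zero : KappaTy .zero tnat
  | succ : KappaTy .succ (tarrow tnat tnat)

/-- The type assignment system λ•→. -/
inductive Types : Ctx → Expr → PseudoType → Prop
  | ax {Γ x t} : Γ x = some t → IsType t → Types Γ (.var x) t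
  | const {Γ k t} : KappaTy k t → Types Γ (.const k) t
  | bulletI {Γ e t} : Types Γ e t → Types Γ e (tbullet t)
  | arrowI {Γ e n t s} :
      Types (Ctx.cons (tbulletN n t) Γ) e (tbulletN n s) →
      Types Γ (.lam e) (tbulletN n (tarrow t s))
  | arrowE {Γ e₁ e₂ n t s} :
      Types Γ e₁ (tbulletN n (tarrow t s)) → Types Γ e₂ (tbulletN n t) →
      Types Γ (.app e₁ e₂) (tbulletN n s)

lemma tbulletN_succ (n : ℕ) (t : PseudoType) : tbulletN (n + 1) t = tbullet (tbulletN n t) :=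
  Function.iterate_succ_apply' _ _ _

lemma tbulletN_add (k n : ℕ) (t : PseudoType) :
    tbulletN (k + n) t = tbulletN k (tbulletN n t) :=
  Function.iterate_add_apply _ _ _ _

lemma tbulletN_tbullet (n : ℕ) (t : PseudoType) :
    tbulletN n (tbullet t) = tbullet (tbulletN n t) :=
  Function.Commute.iterate_self tbullet n t

lemma binf_eq_tbullet : binf = tbullet binf :=
  (PFunctor.M.mk_dest binf).symm.trans (congrArg PFunctor.M.mk (PFunctor.M.dest_corec _ ()))

lemma tbullet_injective : Function.Injective tbullet := fun _ _ h =>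
  congrFun (eq_of_heq (Sigma.mk.inj (PFunctor.M.mk_inj h)).2) ()

lemma tarrow_inj {t s t' s' : PseudoType} (h : tarrow t s = tarrow t' s') : t = t' ∧ s = s' :=
  have h' := eq_of_heq (Sigma.mk.inj (PFunctor.M.mk_inj h)).2
  ⟨congrFun h' false, congrFun h' true⟩

lemma tprod_inj {t s t' s' : PseudoType} (h : tprod t s = tprod t' s') : t = t' ∧ s = s' :=
  have h' := eq_of_heq (Sigma.mk.inj (PFunctor.M.mk_inj h)).2
  ⟨congrFun h' false, congrFun h' true⟩

lemma tbulletN_inj {x y : PseudoType} {n m : ℕ} (h : tbulletN n x = tbulletN m y)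
    (hx : x.dest.1 ≠ .bullet) (hy : y.dest.1 ≠ .bullet) : n = m ∧ x = y := by
  induction n generalizing m with
  | zero =>
    cases m with
    | zero => exact ⟨rfl, h⟩
    | succ m => exact absurd (by rw [show x = _ from h, tbulletN_succ]; rfl) hx
  | succ n ih =>
    cases m with
    | zero => exact absurd (by rw [show y = _ from h.symm, tbulletN_succ]; rfl) hy
    | succ m =>
      rw [tbulletN_succ, tbulletN_succ] at h
      obtain ⟨rfl, rfl⟩ := ih (tbullet_injective h)
      exact ⟨rfl, rfl⟩

def CoreHead (t : PseudoType) (h : TyHead) : Prop :=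
  ∃ n x, t = tbulletN n x ∧ x.dest.1 = h

lemma CoreHead.unique {t : PseudoType} {h₁ h₂ : TyHead} (ht₁ : CoreHead t h₁)
    (ht₂ : CoreHead t h₂) (hb₁ : h₁ ≠ .bullet) (hb₂ : h₂ ≠ .bullet) : h₁ = h₂ := by
  obtain ⟨n₁, x₁, rfl, rfl⟩ := ht₁
  obtain ⟨n₂, x₂, hx, rfl⟩ := ht₂
  rw [(tbulletN_inj hx hb₁ hb₂).2]

lemma CoreHead.ne_binf {t : PseudoType} {h : TyHead} (ht : CoreHead t h) (hb : h ≠ .bullet) :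
    t ≠ binf := by
  obtain ⟨n, x, rfl, rfl⟩ := ht
  induction n with
  | zero => exact fun hx => hb (by rw [show x = binf from hx, binf_eq_tbullet]; rfl)
  | succ n ih =>
    intro hx
    rw [tbulletN_succ, binf_eq_tbullet] at hx
    exact ih (tbullet_injective hx)

lemma child_tbullet {t s : PseudoType} (h : Child (tbullet t) s) : s = t :=
  let ⟨_, hs⟩ := h; hs.symm

lemma isType_tbullet {t : PseudoType} (ht : IsType t) : IsType (tbullet t) := by
  obtain ⟨hreg, hguard⟩ := ht
  refine ⟨(hreg.insert (tbullet t)).subset fun s hs => ?_, fun f hf₀ hf N => ?_⟩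
  · rcases Relation.ReflTransGen.cases_head hs with rfl | ⟨c, hc, hcs⟩
    · exact .inl rfl
    · exact .inr (child_tbullet hc ▸ hcs)
  · have hf₁ : f 1 = t := child_tbullet (hf₀ ▸ hf 0)
    obtain ⟨n, hn, hb⟩ := hguard (fun n => f (n + 1)) hf₁ (fun n => hf (n + 1)) N
    exact ⟨n + 1, by omega, hb⟩

lemma isType_tbulletN {t : PseudoType} (ht : IsType t) (n : ℕ) : IsType (tbulletN n t) := by
  induction n with
  | zero => exact ht
  | succ n ih => rw [tbulletN_succ]; exact isType_tbullet ih

lemma KappaTy.head_ne_bullet {k : Const} {t : PseudoType} (h : KappaTy k t) :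
    t.dest.1 ≠ .bullet := by
  cases h <;> nofun

lemma KappaTy.pair_inv {t s : PseudoType} (h : KappaTy .pair (tarrow t s)) :
    ∃ d, s = tarrow d (tprod t d) := by
  generalize hu : tarrow t s = u at h
  cases h
  obtain ⟨rfl, rfl⟩ := tarrow_inj hu
  exact ⟨_, rfl⟩

lemma KappaTy.fst_inv {t s : PseudoType} (h : KappaTy .cfst (tarrow t s)) :
    ∃ d, t = tprod s d := by
  generalize hu : tarrow t s = u at h
  cases h
  obtain ⟨rfl, rfl⟩ := tarrow_inj hu
  exact ⟨_, rfl⟩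

lemma KappaTy.snd_inv {t s : PseudoType} (h : KappaTy .csnd (tarrow t s)) :
    ∃ c, t = tprod c s := by
  generalize hu : tarrow t s = u at h
  cases h
  obtain ⟨rfl, rfl⟩ := tarrow_inj hu
  exact ⟨_, rfl⟩

lemma KappaTy.succ_inv {t s : PseudoType} (h : KappaTy .succ (tarrow t s)) : s = tnat := by
  generalize hu : tarrow t s = u at h
  cases h
  exact (tarrow_inj hu).2

namespace Types

variable {Γ : Ctx} {a b : Expr} {u : PseudoType}

lemma bulletN (h : Types Γ a u) (n : ℕ) : Types Γ a (tbulletN n u) := by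
  induction n with
  | zero => exact h
  | succ n ih => rw [tbulletN_succ]; exact bulletI ih

lemma var_inv {x : ℕ} (h : Types Γ (.var x) u) : ∃ t, Γ x = some t := by
  generalize he : Expr.var x = e at h
  induction h with
  | ax hx => cases he; exact ⟨_, hx⟩
  | bulletI _ ih => exact ih he
  | _ => cases he

lemma const_inv {k : Const} (h : Types Γ (.const k) u) :
    ∃ n t, u = tbulletN n t ∧ KappaTy k t := by
  generalize he : Expr.const k = e at h
  induction h with
  | const hk => cases he; exact ⟨0, _, rfl, hk⟩
  | bulletI _ ih =>
    obtain ⟨n, t, rfl, hk⟩ := ih he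
    exact ⟨n + 1, t, (tbulletN_succ n t).symm, hk⟩
  | _ => cases he

lemma lam_inv (h : Types Γ (.lam a) u) :
    ∃ k n t s, u = tbulletN k (tbulletN n (tarrow t s)) ∧
      Types (Ctx.cons (tbulletN n t) Γ) a (tbulletN n s) := by
  generalize he : Expr.lam a = e at h
  induction h with
  | arrowI ha => cases he; exact ⟨0, _, _, _, rfl, ha⟩
  | bulletI _ ih =>
    obtain ⟨k, n, t, s, rfl, ha⟩ := ih he
    exact ⟨k + 1, n, t, s, (tbulletN_succ _ _).symm, ha⟩
  | _ => cases he

lemma app_inv (h : Types Γ (.app a b) u) :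
    ∃ n t s, u = tbulletN n s ∧
      Types Γ a (tbulletN n (tarrow t s)) ∧ Types Γ b (tbulletN n t) := by
  generalize he : Expr.app a b = e at h
  induction h with
  | arrowE ha hb => cases he; exact ⟨_, _, _, rfl, ha, hb⟩
  | bulletI _ ih =>
    obtain ⟨n, t, s, rfl, ha, hb⟩ := ih he
    refine ⟨n + 1, t, s, (tbulletN_succ n s).symm, ?_, ?_⟩
    · rw [tbulletN_succ]; exact bulletI ha
    · rw [tbulletN_succ]; exact bulletI hb
  | _ => cases he

lemma const_arrow_inv {k : Const} {n : ℕ} {t s : PseudoType}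
    (h : Types Γ (.const k) (tbulletN n (tarrow t s))) : KappaTy k (tarrow t s) := by
  obtain ⟨m, t', hu, hk⟩ := h.const_inv
  rwa [(tbulletN_inj hu nofun hk.head_ne_bullet).2]

lemma mkPair_inv (h : Types Γ (mkPair a b) u) :
    ∃ n c d, u = tbulletN n (tprod c d) ∧
      Types Γ a (tbulletN n c) ∧ Types Γ b (tbulletN n d) := by
  obtain ⟨n, t, s, rfl, hpa, hb⟩ := h.app_inv
  obtain ⟨m, c, s', hs, hpair, ha⟩ := hpa.app_inv
  obtain ⟨d, rfl⟩ := hpair.const_arrow_inv.pair_inv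
  obtain ⟨rfl, harr⟩ := tbulletN_inj hs nofun nofun
  obtain ⟨rfl, rfl⟩ := tarrow_inj harr
  exact ⟨n, c, t, rfl, ha, hb⟩

lemma rename (h : Types Γ a u) {Δ : Ctx} {f : ℕ → ℕ}
    (hf : ∀ x t, Γ x = some t → Δ (f x) = some t) : Types Δ (LambdaBullet.rename f a) u := by
  induction h generalizing Δ f with
  | ax hx ht => exact ax (hf _ _ hx) ht
  | const hk => exact const hk
  | bulletI _ ih => exact bulletI (ih hf)
  | arrowI _ ih =>
    refine arrowI (ih fun x t hx => ?_)
    cases x with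
    | zero => exact hx
    | succ x => exact hf x t hx
  | arrowE _ _ ih₁ ih₂ => exact arrowE (ih₁ hf) (ih₂ hf)

-- The bullets that `•I` puts above an abstraction are absorbed by substituting terms of type `•ᵏ t`.
lemma substE_bulletN (h : Types Γ a u) {Δ : Ctx} {ρ : ℕ → Expr} {k : ℕ}
    (hρ : ∀ x t, Γ x = some t → IsType t → Types Δ (ρ x) (tbulletN k t)) :
    Types Δ (substE ρ a) (tbulletN k u) := by
  induction h generalizing Δ ρ with
  | ax hx ht => exact hρ _ _ hx ht
  | const hk => exact (const hk).bulletN k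
  | bulletI _ ih => rw [tbulletN_tbullet]; exact bulletI (ih hρ)
  | @arrowI Γ e n t s _ ih =>
    rw [← tbulletN_add]
    refine arrowI ?_
    rw [tbulletN_add, tbulletN_add]
    refine ih fun x t' hx ht' => ?_
    cases x with
    | zero =>
      cases hx
      exact ax rfl (isType_tbulletN ht' k)
    | succ x => exact (hρ x t' hx ht').rename fun _ _ hy => hy
  | arrowE _ _ ih₁ ih₂ =>
    rw [← tbulletN_add] at ih₁ ih₂ ⊢
    exact arrowE (ih₁ hρ) (ih₂ hρ)

lemma subst0 {t : PseudoType} {k : ℕ} (h : Types (Ctx.cons t Γ) a u)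
    (hb : Types Γ b (tbulletN k t)) : Types Γ (LambdaBullet.subst0 a b) (tbulletN k u) := by
  refine h.substE_bulletN fun x t' hx ht' => ?_
  cases x with
  | zero => cases hx; exact hb
  | succ x => exact (ax (show Γ x = some t' from hx) ht').bulletN k

lemma headRed (h : Types Γ a u) (hr : HeadRed a b) : Types Γ b u := by
  cases hr with
  | beta e f =>
    obtain ⟨n, t, s, rfl, hlam, hf⟩ := h.app_inv
    obtain ⟨k, m, t', s', hu, he⟩ := hlam.lam_inv
    rw [← tbulletN_add] at hu
    obtain ⟨rfl, harr⟩ := tbulletN_inj hu nofun nofun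
    obtain ⟨rfl, rfl⟩ := tarrow_inj harr
    rw [tbulletN_add] at hf ⊢
    exact he.subst0 hf
  | fst e f =>
    obtain ⟨n, t, s, rfl, hfst, hpair⟩ := h.app_inv
    obtain ⟨d, rfl⟩ := hfst.const_arrow_inv.fst_inv
    obtain ⟨m, c, d', hu, he, -⟩ := hpair.mkPair_inv
    obtain ⟨rfl, hprod⟩ := tbulletN_inj hu nofun nofun
    obtain ⟨rfl, rfl⟩ := tprod_inj hprod
    exact he
  | snd e f =>
    obtain ⟨n, t, s, rfl, hsnd, hpair⟩ := h.app_inv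
    obtain ⟨c, rfl⟩ := hsnd.const_arrow_inv.snd_inv
    obtain ⟨m, c', d, hu, -, hf⟩ := hpair.mkPair_inv
    obtain ⟨rfl, hprod⟩ := tbulletN_inj hu nofun nofun
    obtain ⟨rfl, rfl⟩ := tprod_inj hprod
    exact hf

lemma plug {e f : Expr} (hef : ∀ {u}, Types Γ e u → Types Γ f u) (E : ECtx)
    (h : Types Γ (E.plug e) u) : Types Γ (E.plug f) u := by
  induction E generalizing u with
  | hole => exact hef h
  | app E g ih =>
    obtain ⟨n, t, s, rfl, hE, hg⟩ := h.app_inv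
    exact arrowE (ih hE) hg
  | fst E ih | snd E ih | succ E ih =>
    obtain ⟨n, t, s, rfl, hk, hE⟩ := h.app_inv
    exact arrowE hk (ih hE)

lemma red (h : Types Γ a u) (hr : Red a b) : Types Γ b u := by
  obtain ⟨E, e, f, hef, rfl, rfl⟩ := hr
  exact plug (fun he => he.headRed hef) E h

lemma redStar (h : Types Γ a u) (hr : RedStar a b) : Types Γ b u := by
  induction hr with
  | refl => exact h
  | tail _ hr ih => exact ih.red hr

end Types

lemma HeadRed.red {a b : Expr} (h : HeadRed a b) : Red a b :=
  ⟨.hole, a, b, h, rfl, rfl⟩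

namespace NormalForm

variable {a b : Expr}

lemma of_app (h : NormalForm (.app a b)) : NormalForm a := by
  rintro a' ⟨E, e, f, hr, rfl, rfl⟩
  exact h _ ⟨E.app b, e, f, hr, rfl, rfl⟩

lemma of_fst (h : NormalForm (.app (.const .cfst) b)) : NormalForm b := by
  rintro b' ⟨E, e, f, hr, rfl, rfl⟩
  exact h _ ⟨E.fst, e, f, hr, rfl, rfl⟩

lemma of_snd (h : NormalForm (.app (.const .csnd) b)) : NormalForm b := by
  rintro b' ⟨E, e, f, hr, rfl, rfl⟩
  exact h _ ⟨E.snd, e, f, hr, rfl, rfl⟩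

end NormalForm

/-- The weak head values; the index is the root of their types once the bullets are stripped. -/
inductive Value : Expr → TyHead → Prop
  | lam (e : Expr) : Value (.lam e) .arrow
  | const {k : Const} : k ≠ .zero → Value (.const k) .arrow
  | zero : Value (.const .zero) .nat
  | pairPartial (a : Expr) : Value (.app (.const .pair) a) .arrow
  | pair (a b : Expr) : Value (mkPair a b) .prod
  | succ (a : Expr) : Value (.app (.const .succ) a) .nat

namespace Value

variable {v : Expr} {h : TyHead}

lemma head_ne_bullet (hv : Value v h) : h ≠ .bullet := by
  cases hv <;> nofun

lemma coreHead {Γ : Ctx} {u : PseudoType} (hv : Value v h) (ht : Types Γ v u) :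
    CoreHead u h := by
  cases hv with
  | lam e =>
    obtain ⟨k, n, t, s, rfl, -⟩ := ht.lam_inv
    exact ⟨k + n, _, (tbulletN_add k n _).symm, rfl⟩
  | const hk =>
    obtain ⟨n, t, rfl, hkt⟩ := ht.const_inv
    cases hkt <;> first | exact ⟨n, _, rfl, rfl⟩ | exact absurd rfl hk
  | zero =>
    obtain ⟨n, t, rfl, hkt⟩ := ht.const_inv
    cases hkt
    exact ⟨n, _, rfl, rfl⟩
  | pairPartial a =>
    obtain ⟨n, t, s, rfl, hpair, -⟩ := ht.app_inv
    obtain ⟨d, rfl⟩ := hpair.const_arrow_inv.pair_inv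
    exact ⟨n, _, rfl, rfl⟩
  | pair a b =>
    obtain ⟨n, c, d, rfl, -⟩ := ht.mkPair_inv
    exact ⟨n, _, rfl, rfl⟩
  | succ a =>
    obtain ⟨n, t, s, rfl, hsucc, -⟩ := ht.app_inv
    rw [hsucc.const_arrow_inv.succ_inv]
    exact ⟨n, _, rfl, rfl⟩

end Value

lemma Types.exists_value_of_normalForm {f : Expr} {u : PseudoType}
    (h : Types (fun _ => none) f u) (hf : NormalForm f) : ∃ hd, Value f hd := by
  induction f generalizing u with
  | var x =>
    obtain ⟨t, ht⟩ := h.var_inv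
    cases ht
  | const k =>
    by_cases hk : k = .zero
    · exact hk ▸ ⟨_, .zero⟩
    · exact ⟨_, .const hk⟩
  | lam e => exact ⟨_, .lam e⟩
  | app a b iha ihb =>
    obtain ⟨n, t, s, rfl, ha, hb⟩ := h.app_inv
    obtain ⟨hd, hv⟩ := iha ha hf.of_app
    obtain rfl : hd = .arrow := (hv.coreHead ha).unique ⟨n, _, rfl, rfl⟩ hv.head_ne_bullet nofun
    -- a normal argument of product type is a pair, so a projection applied to it is a redex
    have pair_of_tprod : ∀ {m c d}, Types (fun _ => none) b (tbulletN m (tprod c d)) →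
        NormalForm b → ∃ p q, b = mkPair p q := by
      intro m c d hb hnf
      obtain ⟨hd', hv'⟩ := ihb hb hnf
      obtain rfl : hd' = .prod :=
        (hv'.coreHead hb).unique ⟨m, _, rfl, rfl⟩ hv'.head_ne_bullet nofun
      cases hv'
      exact ⟨_, _, rfl⟩
    cases hv with
    | lam e => exact absurd (HeadRed.beta e b).red (hf _)
    | pairPartial p => exact ⟨_, .pair p b⟩
    | @const k hk =>
      cases k with
      | pair => exact ⟨_, .pairPartial b⟩
      | cfst =>
        obtain ⟨d, rfl⟩ := ha.const_arrow_inv.fst_inv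
        obtain ⟨p, q, rfl⟩ := pair_of_tprod hb hf.of_fst
        exact absurd (HeadRed.fst p q).red (hf _)
      | csnd =>
        obtain ⟨c, rfl⟩ := ha.const_arrow_inv.snd_inv
        obtain ⟨p, q, rfl⟩ := pair_of_tprod hb hf.of_snd
        exact absurd (HeadRed.snd p q).red (hf _)
      | zero => exact absurd rfl hk
      | succ => exact ⟨_, .succ b⟩

/-- if `⊢ e : t` (empty context) and `e` is normalizing then
`t ≠ •^∞`. -/
theorem normalizing_type_ne_binf (e : Expr) (t : PseudoType)
    (h : Types (fun _ => none) e t)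
    (hn : ∃ f, RedStar e f ∧ NormalForm f) :
    t ≠ binf := by
  rintro rfl
  obtain ⟨f, hef, hf⟩ := hn
  have hft := h.redStar hef
  obtain ⟨hd, hv⟩ := hft.exists_value_of_normalForm hf
  exact (hv.coreHead hft).ne_binf hv.head_ne_bullet rfl

end LambdaBullet
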